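/- Let M > 0 and r₀ ∈ (0, 2M). Let −∞ ≤ a < b ≤ ∞ and let γ = (t, x) : (a, b) → ℝ × ℝ³ be a C¹ curve with 0 < ‖x(s)‖ < 2M and Q_M(t'(s), x'(s), x(s)) = −1 for every s ∈ (a, b). Assume γ is inextensible at both ends: for each finite endpoint of (a, b), there is no continuous extension of γ to the interval including that endpoint whose value there has spatial part of norm strictly between 0 and 2M. Then there exists exactly one s ∈ (a, b) with ‖x(s)‖ = r₀; i.e., every inextensible unit-speed timelike curve of the interior Schwarzschild spacetime meets the hypersurface S_{r₀} := {(t,x) ∈ M_Sch : ‖x‖ = r₀} exactly once (S_{r₀} is a Cauchy surface for timelike curves). -/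

import Mathlib

/-!
Along a unit-speed timelike curve of the Schwarzschild interior the radius `ρ = ‖x‖` is a time
function. With `p = ⟪x, x'⟫`, clearing denominators in `Q_M = -1` and using Cauchy–Schwarz gives
`p² ≥ (2M - ρ) ρ > 0`, so `ρ' = p / ρ` never vanishes and, by Darboux, has a constant sign: `ρ` is
strictly monotone, which gives uniqueness. The same identity yields `|ρ'| ≥ √((2M - ρ) / ρ)` and
`‖(t', x')‖ ≤ 2M / (2M - ρ) · |ρ'|`. If `ρ` never took the value `r₀`, then on the half of the
parameter interval along which `ρ` moves towards `r₀` it would stay in a compact subinterval of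
`(0, 2M)`. There the first bound makes that half bounded, so its end is finite, and the second
makes the curve Cauchy as the monotone `ρ` converges; the curve would then extend continuously to
that end with radius in `(0, 2M)`, contradicting inextensibility.
-/

/-- The Schwarzschild quadratic form of mass `M`, evaluated on a velocity `(t', x')`
at a point with spatial part `x` (where `0 < ‖x‖ < 2M`). -/
noncomputable def QM (M : ℝ) (t' : ℝ) (x' x : EuclideanSpace ℝ (Fin 3)) : ℝ :=
  (2 * M / ‖x‖ - 1) * t' ^ 2 + ‖x'‖ ^ 2
    - (2 * M / ((2 * M - ‖x‖) * ‖x‖ ^ 2)) * (inner ℝ x x' : ℝ) ^ 2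

open Real Set Filter Topology
open scoped RealInnerProductSpace

section MeanValue

variable {E : Type*} [NormedAddCommGroup E] [NormedSpace ℝ E]

theorem norm_sub_le_mul_sub_of_norm_deriv_le {f f' : ℝ → E} {g g' : ℝ → ℝ} {S : Set ℝ}
    {C : ℝ} (hS : S.OrdConnected) (hf : ∀ s ∈ S, HasDerivAt f (f' s) s)
    (hg : ∀ s ∈ S, HasDerivAt g (g' s) s) (hle : ∀ s ∈ S, ‖f' s‖ ≤ C * g' s)
    {s₁ s₂ : ℝ} (h₁ : s₁ ∈ S) (h₂ : s₂ ∈ S) (h₁₂ : s₁ ≤ s₂) :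
    ‖f s₂ - f s₁‖ ≤ C * (g s₂ - g s₁) := by
  have hsub : Icc s₁ s₂ ⊆ S := hS.out h₁ h₂
  have hsub' : Ico s₁ s₂ ⊆ S := Ico_subset_Icc_self.trans hsub
  refine image_norm_le_of_norm_deriv_right_le_deriv_boundary' (f := fun s => f s - f s₁)
    (B := fun s => C * (g s - g s₁))
    (fun s hs => ((hf s (hsub hs)).sub_const _).continuousAt.continuousWithinAt)
    (fun s hs => ((hf s (hsub' hs)).sub_const _).hasDerivWithinAt) (by simp)
    (fun s hs => (((hg s (hsub hs)).sub_const _).const_mul C).continuousAt.continuousWithinAt)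
    (fun s hs => (((hg s (hsub' hs)).sub_const _).const_mul C).hasDerivWithinAt)
    (fun s hs => hle s (hsub' hs)) (right_mem_Icc.2 h₁₂)

theorem dist_le_mul_dist_of_norm_deriv_le {f f' : ℝ → E} {g g' : ℝ → ℝ} {S : Set ℝ}
    {C : ℝ} (hS : S.OrdConnected) (hf : ∀ s ∈ S, HasDerivAt f (f' s) s)
    (hg : ∀ s ∈ S, HasDerivAt g (g' s) s) (hC : 0 ≤ C)
    (hsign : (∀ s ∈ S, g' s ≤ 0) ∨ ∀ s ∈ S, 0 ≤ g' s) (hle : ∀ s ∈ S, ‖f' s‖ ≤ C * |g' s|)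
    {s₁ s₂ : ℝ} (h₁ : s₁ ∈ S) (h₂ : s₂ ∈ S) :
    dist (f s₁) (f s₂) ≤ C * dist (g s₁) (g s₂) := by
  wlog hpos : ∀ s ∈ S, 0 ≤ g' s generalizing g g'
  · have hneg := hsign.resolve_right hpos
    simpa [dist_neg_neg] using this (g := -g) (g' := -g') (fun s hs => (hg s hs).neg)
      (Or.inr fun s hs => neg_nonneg.2 (hneg s hs)) (by simpa using hle)
      fun s hs => neg_nonneg.2 (hneg s hs)
  wlog h₁₂ : s₁ ≤ s₂ generalizing s₁ s₂
  · rw [dist_comm, dist_comm (g s₁)]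
    exact this h₂ h₁ (le_of_not_ge h₁₂)
  rw [dist_comm, dist_eq_norm, dist_comm, Real.dist_eq]
  calc ‖f s₂ - f s₁‖ ≤ C * (g s₂ - g s₁) :=
        norm_sub_le_mul_sub_of_norm_deriv_le hS hf hg
          (fun s hs => by simpa [abs_of_nonneg (hpos s hs)] using hle s hs) h₁ h₂ h₁₂
    _ ≤ C * |g s₂ - g s₁| := mul_le_mul_of_nonneg_left (le_abs_self _) hC

end MeanValue

theorem Cauchy.map_of_dist_le {α β γ : Type*} [PseudoMetricSpace β] [PseudoMetricSpace γ]
    {l : Filter α} {f : α → β} {g : α → γ} {S : Set α} {C : ℝ} (hg : Cauchy (l.map g))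
    (hS : S ∈ l) (hfg : ∀ s₁ ∈ S, ∀ s₂ ∈ S, dist (f s₁) (f s₂) ≤ C * dist (g s₁) (g s₂)) :
    Cauchy (l.map f) := by
  rw [cauchy_map_iff, tendsto_uniformity_iff_dist_tendsto_zero] at hg ⊢
  refine ⟨hg.1, squeeze_zero' (Eventually.of_forall fun _ => dist_nonneg) ?_
    (by simpa using hg.2.const_mul C)⟩
  filter_upwards [prod_mem_prod hS hS] with p hp using hfg _ hp.1 _ hp.2

theorem ContinuousOn.exists_extension_of_tendsto {X Y : Type*} [TopologicalSpace X] [T1Space X]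
    [TopologicalSpace Y] {f : X → Y} {s : Set X} {e : X} {y : Y} (hf : ContinuousOn f s)
    (he : e ∉ s) (hy : Tendsto f (𝓝[s] e) (𝓝 y)) :
    ∃ g : X → Y, ContinuousOn g (insert e s) ∧ EqOn g f s ∧ g e = y := by
  classical
  refine ⟨Function.update f e y, ?_,
    fun z hz => Function.update_of_ne (ne_of_mem_of_not_mem hz he) _ _, Function.update_self ..⟩
  rw [continuousOn_update_iff, insert_sdiff_self_of_notMem he]
  exact ⟨hf, fun _ => hy⟩

theorem IsPreconnected.forall_lt_or_forall_gt_of_forall_ne {X α : Type*} [TopologicalSpace X]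
    [LinearOrder α] [TopologicalSpace α] [OrderClosedTopology α] {S : Set X}
    (hS : IsPreconnected S) {f : X → α} (hf : ContinuousOn f S) {c : α}
    (hc : ∀ s ∈ S, f s ≠ c) : (∀ s ∈ S, f s < c) ∨ ∀ s ∈ S, c < f s := by
  by_contra! h
  obtain ⟨⟨s₁, hs₁, h₁⟩, ⟨s₂, hs₂, h₂⟩⟩ := h
  obtain ⟨s, hs, hsc⟩ := hS.intermediate_value hs₂ hs₁ hf ⟨h₂, h₁⟩
  exact hc s hs hsc

theorem mapsTo_inter_Ici_or_mapsTo_inter_Iic_uIcc {α β : Type*} [LinearOrder α] [LinearOrder β]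
    {f : α → β} {S : Set α} {s₀ : α} {c : β} (hf : MonotoneOn f S ∨ AntitoneOn f S)
    (hc : (∀ s ∈ S, f s < c) ∨ ∀ s ∈ S, c < f s) (hs₀ : s₀ ∈ S) :
    MapsTo f (S ∩ Ici s₀) (uIcc (f s₀) c) ∨ MapsTo f (S ∩ Iic s₀) (uIcc (f s₀) c) := by
  rcases hf with hf | hf <;> rcases hc with hc | hc
  · exact Or.inl fun s hs => mem_uIcc_of_le (hf hs₀ hs.1 hs.2) (hc s hs.1).le
  · exact Or.inr fun s hs => mem_uIcc_of_ge (hc s hs.1).le (hf hs.1 hs₀ hs.2)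
  · exact Or.inr fun s hs => mem_uIcc_of_le (hf hs.1 hs₀ hs.2) (hc s hs.1).le
  · exact Or.inl fun s hs => mem_uIcc_of_ge (hc s hs.1).le (hf hs₀ hs.1 hs.2)

theorem exists_tendsto_nhdsLT_of_mapsTo_Icc {f : ℝ → ℝ} {a b δ R : ℝ} (hab : a < b)
    (hf : MonotoneOn f (Ioo a b) ∨ AntitoneOn f (Ioo a b)) (hfI : MapsTo f (Ioo a b) (Icc δ R)) :
    ∃ ℓ, Tendsto f (𝓝[<] b) (𝓝 ℓ) :=
  hf.elim
    (fun hf => ⟨_, hf.tendsto_nhdsWithin_Ioo_left (nonempty_Ioo.2 hab)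
      (bddAbove_Icc.mono hfI.image_subset)⟩)
    (fun hf => ⟨_, hf.tendsto_nhdsWithin_Ioo_left (nonempty_Ioo.2 hab)
      (bddBelow_Icc.mono hfI.image_subset)⟩)

theorem exists_tendsto_nhdsGT_of_mapsTo_Icc {f : ℝ → ℝ} {a b δ R : ℝ} (hab : a < b)
    (hf : MonotoneOn f (Ioo a b) ∨ AntitoneOn f (Ioo a b)) (hfI : MapsTo f (Ioo a b) (Icc δ R)) :
    ∃ ℓ, Tendsto f (𝓝[>] a) (𝓝 ℓ) :=
  hf.elim
    (fun hf => ⟨_, hf.tendsto_nhdsWithin_Ioo_right (nonempty_Ioo.2 hab)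
      (bddBelow_Icc.mono hfI.image_subset)⟩)
    (fun hf => ⟨_, hf.tendsto_nhdsWithin_Ioo_right (nonempty_Ioo.2 hab)
      (bddAbove_Icc.mono hfI.image_subset)⟩)

theorem EReal.isOpen_preimage_coe_Ioo (a b : EReal) : IsOpen (((↑) : ℝ → EReal) ⁻¹' Ioo a b) :=
  isOpen_Ioo.preimage continuous_coe_real_ereal

theorem EReal.ordConnected_preimage_coe_Ioo (a b : EReal) :
    (((↑) : ℝ → EReal) ⁻¹' Ioo a b).OrdConnected :=
  ordConnected_Ioo.preimage_mono EReal.coe_strictMono.monotone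

theorem inner_sq_le_norm_sq_mul_norm_sq {F : Type*} [NormedAddCommGroup F]
    [InnerProductSpace ℝ F] (x y : F) : ⟪x, y⟫ ^ 2 ≤ ‖x‖ ^ 2 * ‖y‖ ^ 2 := by
  simpa [sq, real_inner_self_eq_norm_mul_norm, mul_mul_mul_comm] using
    real_inner_mul_inner_self_le x y

theorem HasDerivAt.norm {F : Type*} [NormedAddCommGroup F] [InnerProductSpace ℝ F]
    {f : ℝ → F} {f' : F} {s : ℝ} (hf : HasDerivAt f f' s) (h0 : f s ≠ 0) :
    HasDerivAt (‖f ·‖) (⟪f s, f'⟫ / ‖f s‖) s := by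
  have h := hf.norm_sq.sqrt (by positivity)
  simp only [sqrt_sq (norm_nonneg _)] at h
  convert h using 1
  ring

section Pointwise

variable {M τ : ℝ} {v x : EuclideanSpace ℝ (Fin 3)}

theorem QM_eq_neg_one_iff (h0 : 0 < ‖x‖) (h2M : ‖x‖ < 2 * M) :
    QM M τ v x = -1 ↔
      (2 * M - ‖x‖) ^ 2 * ‖x‖ ^ 2 * τ ^ 2 + (2 * M - ‖x‖) * ‖x‖ ^ 3 * ‖v‖ ^ 2
        + (2 * M - ‖x‖) * ‖x‖ ^ 3 = 2 * M * ‖x‖ * ⟪x, v⟫ ^ 2 := by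
  have hk : 2 * M - ‖x‖ ≠ 0 := by linarith
  have hmul : (QM M τ v x + 1) * ((2 * M - ‖x‖) * ‖x‖ ^ 3) =
      (2 * M - ‖x‖) ^ 2 * ‖x‖ ^ 2 * τ ^ 2 + (2 * M - ‖x‖) * ‖x‖ ^ 3 * ‖v‖ ^ 2
        + (2 * M - ‖x‖) * ‖x‖ ^ 3 - 2 * M * ‖x‖ * ⟪x, v⟫ ^ 2 := by
    unfold QM
    field_simp
    ring
  rw [← add_eq_zero_iff_eq_neg, ← sub_eq_zero (b := 2 * M * ‖x‖ * ⟪x, v⟫ ^ 2), ← hmul,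
    mul_eq_zero_iff_right (by positivity)]

theorem sub_div_le_sq_inner_div_of_QM_eq (h0 : 0 < ‖x‖) (h2M : ‖x‖ < 2 * M)
    (hQ : QM M τ v x = -1) : (2 * M - ‖x‖) / ‖x‖ ≤ (⟪x, v⟫ / ‖x‖) ^ 2 := by
  have hid := (QM_eq_neg_one_iff h0 h2M).1 hQ
  have hCS := inner_sq_le_norm_sq_mul_norm_sq x v
  have hk : 0 < 2 * M - ‖x‖ := by linarith
  rw [div_pow, div_le_div_iff₀ h0 (by positivity)]
  nlinarith [mul_le_mul_of_nonneg_left hCS (mul_nonneg hk.le h0.le), mul_pos h0 h0,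
    mul_nonneg (mul_nonneg (sq_nonneg (2 * M - ‖x‖)) (sq_nonneg ‖x‖)) (sq_nonneg τ)]

theorem norm_le_mul_abs_inner_div_of_QM_eq (h0 : 0 < ‖x‖) (h2M : ‖x‖ < 2 * M)
    (hQ : QM M τ v x = -1) : ‖(τ, v)‖ ≤ 2 * M / (2 * M - ‖x‖) * |⟪x, v⟫ / ‖x‖| := by
  have hid := (QM_eq_neg_one_iff h0 h2M).1 hQ
  have hCS := inner_sq_le_norm_sq_mul_norm_sq x v
  have hk : 0 < 2 * M - ‖x‖ := by linarith
  have hr3 : 0 ≤ (2 * M - ‖x‖) * ‖x‖ ^ 3 := by positivity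
  have hτ : (2 * M - ‖x‖) * |τ| ≤ |⟪x, v⟫| := by
    rw [← abs_of_pos hk, ← abs_mul, ← sq_le_sq]
    refine le_of_mul_le_mul_left ?_ (pow_pos h0 2)
    nlinarith [mul_le_mul_of_nonneg_left hCS (mul_nonneg hk.le h0.le)]
  have hv : (2 * M - ‖x‖) * ‖x‖ ^ 2 * ‖v‖ ^ 2 ≤ 2 * M * ⟪x, v⟫ ^ 2 := by
    refine le_of_mul_le_mul_left ?_ h0
    nlinarith [mul_nonneg (sq_nonneg (2 * M - ‖x‖)) (mul_nonneg (sq_nonneg ‖x‖) (sq_nonneg τ))]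
  have hv' : (2 * M - ‖x‖) * ‖x‖ * ‖v‖ ≤ 2 * M * |⟪x, v⟫| := by
    refine (pow_le_pow_iff_left₀ (by positivity) (mul_nonneg (by linarith) (abs_nonneg _))
      two_ne_zero).1 ?_
    calc ((2 * M - ‖x‖) * ‖x‖ * ‖v‖) ^ 2
        = (2 * M - ‖x‖) * ((2 * M - ‖x‖) * ‖x‖ ^ 2 * ‖v‖ ^ 2) := by ring
      _ ≤ 2 * M * (2 * M * ⟪x, v⟫ ^ 2) :=
        mul_le_mul (by linarith) hv (by positivity) (by linarith)
      _ = (2 * M * |⟪x, v⟫|) ^ 2 := by rw [mul_pow, sq_abs]; ring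
  rw [abs_div, abs_norm, div_mul_div_comm, le_div_iff₀ (by positivity), Prod.norm_def,
    max_mul_of_nonneg _ _ (by positivity), max_le_iff, Real.norm_eq_abs]
  constructor
  · nlinarith [abs_nonneg ⟪x, v⟫]
  · linarith

end Pointwise

structure IsUnitTimelikeOn (M : ℝ) (S : Set ℝ) (t t' : ℝ → ℝ)
    (x x' : ℝ → EuclideanSpace ℝ (Fin 3)) : Prop where
  hasDerivAt_time : ∀ s ∈ S, HasDerivAt t (t' s) s
  hasDerivAt_space : ∀ s ∈ S, HasDerivAt x (x' s) s
  norm_pos : ∀ s ∈ S, 0 < ‖x s‖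
  norm_lt : ∀ s ∈ S, ‖x s‖ < 2 * M
  QM_eq : ∀ s ∈ S, QM M (t' s) (x' s) (x s) = -1

namespace IsUnitTimelikeOn

variable {M δ R : ℝ} {S T : Set ℝ} {t t' : ℝ → ℝ} {x x' : ℝ → EuclideanSpace ℝ (Fin 3)}

theorem mono (h : IsUnitTimelikeOn M S t t' x x') (hTS : T ⊆ S) :
    IsUnitTimelikeOn M T t t' x x' :=
  ⟨fun s hs => h.1 s (hTS hs), fun s hs => h.2 s (hTS hs), fun s hs => h.3 s (hTS hs),
    fun s hs => h.4 s (hTS hs), fun s hs => h.5 s (hTS hs)⟩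

theorem hasDerivAt_norm (h : IsUnitTimelikeOn M S t t' x x') {s : ℝ} (hs : s ∈ S) :
    HasDerivAt (‖x ·‖) (⟪x s, x' s⟫ / ‖x s‖) s :=
  (h.hasDerivAt_space s hs).norm (norm_pos_iff.1 (h.norm_pos s hs))

theorem continuousOn (h : IsUnitTimelikeOn M S t t' x x') :
    ContinuousOn (fun s => (t s, x s)) S := fun s hs =>
  ((h.hasDerivAt_time s hs).prodMk (h.hasDerivAt_space s hs)).continuousAt.continuousWithinAt

theorem continuousOn_norm (h : IsUnitTimelikeOn M S t t' x x') : ContinuousOn (‖x ·‖) S :=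
  fun _ hs => (h.hasDerivAt_norm hs).continuousAt.continuousWithinAt

theorem inner_div_norm_neg_or_pos (h : IsUnitTimelikeOn M S t t' x x') (hS : S.OrdConnected) :
    (∀ s ∈ S, ⟪x s, x' s⟫ / ‖x s‖ < 0) ∨ ∀ s ∈ S, 0 < ⟪x s, x' s⟫ / ‖x s‖ := by
  refine hasDerivWithinAt_forall_lt_or_forall_gt_of_forall_ne hS.convex
    (fun s hs => (h.hasDerivAt_norm hs).hasDerivWithinAt) fun s hs h0 => ?_
  have hle := sub_div_le_sq_inner_div_of_QM_eq (h.norm_pos s hs) (h.norm_lt s hs) (h.QM_eq s hs)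
  rw [h0, sq, zero_mul] at hle
  exact (div_pos (sub_pos.2 (h.norm_lt s hs)) (h.norm_pos s hs)).not_ge hle

theorem strictMonoOn_or_strictAntiOn (h : IsUnitTimelikeOn M S t t' x x')
    (hS : S.OrdConnected) : StrictMonoOn (‖x ·‖) S ∨ StrictAntiOn (‖x ·‖) S := by
  have hderiv : ∀ s ∈ interior S, deriv (‖x ·‖) s = ⟪x s, x' s⟫ / ‖x s‖ := fun s hs =>
    (h.hasDerivAt_norm (interior_subset hs)).deriv
  refine (h.inner_div_norm_neg_or_pos hS).symm.imp (fun hpos => ?_) fun hneg => ?_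
  · exact strictMonoOn_of_deriv_pos hS.convex h.continuousOn_norm fun s hs =>
      (hderiv s hs).symm ▸ hpos s (interior_subset hs)
  · exact strictAntiOn_of_deriv_neg hS.convex h.continuousOn_norm fun s hs =>
      (hderiv s hs).symm ▸ hneg s (interior_subset hs)

theorem dist_curve_le (h : IsUnitTimelikeOn M S t t' x x') (hS : S.OrdConnected)
    (hR : R < 2 * M) (hρR : ∀ s ∈ S, ‖x s‖ ≤ R) {s₁ s₂ : ℝ} (h₁ : s₁ ∈ S) (h₂ : s₂ ∈ S) :
    dist (t s₁, x s₁) (t s₂, x s₂) ≤ 2 * M / (2 * M - R) * dist ‖x s₁‖ ‖x s₂‖ := by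
  have hM : 0 < 2 * M := (h.norm_pos s₁ h₁).trans (h.norm_lt s₁ h₁)
  refine dist_le_mul_dist_of_norm_deriv_le (f := fun s => (t s, x s)) hS
    (fun s hs => (h.hasDerivAt_time s hs).prodMk (h.hasDerivAt_space s hs))
    (fun s hs => h.hasDerivAt_norm hs) (div_nonneg hM.le (sub_pos.2 hR).le)
    ((h.inner_div_norm_neg_or_pos hS).imp (fun h s hs => (h s hs).le) fun h s hs => (h s hs).le)
    (fun s hs => ?_) h₁ h₂
  refine (norm_le_mul_abs_inner_div_of_QM_eq (h.norm_pos s hs) (h.norm_lt s hs)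
    (h.QM_eq s hs)).trans (mul_le_mul_of_nonneg_right ?_ (abs_nonneg _))
  exact div_le_div_of_nonneg_left hM.le (sub_pos.2 hR) (by linarith [hρR s hs])

theorem dist_param_le (h : IsUnitTimelikeOn M S t t' x x') (hS : S.OrdConnected)
    (hR : R < 2 * M) (hρR : ∀ s ∈ S, ‖x s‖ ≤ R) {s₁ s₂ : ℝ} (h₁ : s₁ ∈ S) (h₂ : s₂ ∈ S) :
    dist s₁ s₂ ≤ √(R / (2 * M - R)) * dist ‖x s₁‖ ‖x s₂‖ := by
  refine dist_le_mul_dist_of_norm_deriv_le (f := id) (f' := fun _ => 1) hS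
    (fun s _ => hasDerivAt_id s) (fun s hs => h.hasDerivAt_norm hs) (sqrt_nonneg _)
    ((h.inner_div_norm_neg_or_pos hS).imp (fun h s hs => (h s hs).le) fun h s hs => (h s hs).le)
    (fun s hs => ?_) h₁ h₂
  have h0 := h.norm_pos s hs
  have hK : 0 ≤ R / (2 * M - R) := div_nonneg (h0.trans_le (hρR s hs)).le (sub_pos.2 hR).le
  have hsq := sub_div_le_sq_inner_div_of_QM_eq h0 (h.norm_lt s hs) (h.QM_eq s hs)
  have hone : 1 ≤ R / (2 * M - R) * (⟪x s, x' s⟫ / ‖x s‖) ^ 2 := by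
    refine le_trans ?_ (mul_le_mul_of_nonneg_left hsq hK)
    rw [div_mul_div_comm, one_le_div (mul_pos (sub_pos.2 hR) h0)]
    nlinarith [hρR s hs]
  rw [norm_one, ← sqrt_sq_eq_abs, ← sqrt_mul hK]
  exact one_le_sqrt.2 hone

theorem isBounded (h : IsUnitTimelikeOn M S t t' x x') (hS : S.OrdConnected) (hR : R < 2 * M)
    (hρ : MapsTo (‖x ·‖) S (Icc δ R)) : Bornology.IsBounded S :=
  Metric.isBounded_iff.2 ⟨√(R / (2 * M - R)) * (R - δ), fun _ h₁ _ h₂ =>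
    (h.dist_param_le hS hR (fun _ hs => (hρ hs).2) h₁ h₂).trans
      (mul_le_mul_of_nonneg_left (Real.dist_le_of_mem_Icc (hρ h₁) (hρ h₂)) (sqrt_nonneg _))⟩

theorem exists_tendsto (h : IsUnitTimelikeOn M S t t' x x') (hS : S.OrdConnected)
    (hR : R < 2 * M) (hρ : MapsTo (‖x ·‖) S (Icc δ R)) {l : Filter ℝ} [l.NeBot] (hl : S ∈ l)
    {ℓ : ℝ} (hℓ : Tendsto (‖x ·‖) l (𝓝 ℓ)) :
    ∃ L : ℝ × EuclideanSpace ℝ (Fin 3),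
      Tendsto (fun s => (t s, x s)) l (𝓝 L) ∧ ‖L.2‖ ∈ Icc δ R := by
  obtain ⟨L, hL⟩ := cauchy_map_iff_exists_tendsto.1 <| hℓ.cauchy_map.map_of_dist_le hl
    fun _ h₁ _ h₂ => h.dist_curve_le hS hR (fun _ hs => (hρ hs).2) h₁ h₂
  exact ⟨L, hL, isClosed_Icc.mem_of_tendsto ((continuous_snd.norm.tendsto L).comp hL)
    (eventually_of_mem hl hρ)⟩

variable {a b : EReal}

theorem exists_tendsto_right (h : IsUnitTimelikeOn M ((↑) ⁻¹' Ioo a b) t t' x x') {s₀ : ℝ}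
    (hs₀ : (s₀ : EReal) ∈ Ioo a b) (hR : R < 2 * M)
    (hρ : MapsTo (‖x ·‖) ((↑) ⁻¹' Ioo a b ∩ Ici s₀) (Icc δ R)) :
    ∃ bR : ℝ, b = bR ∧ ∃ L : ℝ × EuclideanSpace ℝ (Fin 3),
      Tendsto (fun s => (t s, x s)) (𝓝[(↑) ⁻¹' Ioo a b] bR) (𝓝 L) ∧ ‖L.2‖ ∈ Icc δ R := by
  obtain ⟨bR, rfl⟩ : ∃ bR : ℝ, b = bR := by
    induction b using EReal.rec with
    | bot => exact absurd hs₀.2 not_lt_bot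
    | top =>
      have hsub : Ioi s₀ ⊆ (↑) ⁻¹' Ioo a ⊤ := fun s hs =>
        ⟨hs₀.1.trans (EReal.coe_lt_coe_iff.2 hs), EReal.coe_lt_top s⟩
      exact absurd ((h.mono hsub).isBounded ordConnected_Ioi hR
        fun _ hs => hρ ⟨hsub hs, Ioi_subset_Ici_self hs⟩).bddAbove (not_bddAbove_Ioi s₀)
    | coe bR => exact ⟨bR, rfl⟩
  have hs₀b : s₀ < bR := EReal.coe_lt_coe_iff.1 hs₀.2
  have hsub : Ioo s₀ bR ⊆ (↑) ⁻¹' Ioo a bR := fun s hs =>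
    ⟨hs₀.1.trans (EReal.coe_lt_coe_iff.2 hs.1), EReal.coe_lt_coe_iff.2 hs.2⟩
  have hρ' : MapsTo (‖x ·‖) (Ioo s₀ bR) (Icc δ R) := fun s hs => hρ ⟨hsub hs, hs.1.le⟩
  obtain ⟨ℓ, hℓ⟩ := exists_tendsto_nhdsLT_of_mapsTo_Icc hs₀b
    (((h.mono hsub).strictMonoOn_or_strictAntiOn ordConnected_Ioo).imp
      StrictMonoOn.monotoneOn StrictAntiOn.antitoneOn) hρ'
  obtain ⟨L, hL, hL₂⟩ :=
    (h.mono hsub).exists_tendsto ordConnected_Ioo hR hρ' (Ioo_mem_nhdsLT hs₀b) hℓ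
  exact ⟨bR, rfl, L, hL.mono_left (nhdsWithin_mono _ fun s hs => EReal.coe_lt_coe_iff.1 hs.2), hL₂⟩

theorem exists_tendsto_left (h : IsUnitTimelikeOn M ((↑) ⁻¹' Ioo a b) t t' x x') {s₀ : ℝ}
    (hs₀ : (s₀ : EReal) ∈ Ioo a b) (hR : R < 2 * M)
    (hρ : MapsTo (‖x ·‖) ((↑) ⁻¹' Ioo a b ∩ Iic s₀) (Icc δ R)) :
    ∃ aR : ℝ, a = aR ∧ ∃ L : ℝ × EuclideanSpace ℝ (Fin 3),
      Tendsto (fun s => (t s, x s)) (𝓝[(↑) ⁻¹' Ioo a b] aR) (𝓝 L) ∧ ‖L.2‖ ∈ Icc δ R := by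
  obtain ⟨aR, rfl⟩ : ∃ aR : ℝ, a = aR := by
    induction a using EReal.rec with
    | bot =>
      have hsub : Iio s₀ ⊆ (↑) ⁻¹' Ioo ⊥ b := fun s hs =>
        ⟨EReal.bot_lt_coe s, (EReal.coe_lt_coe_iff.2 hs).trans hs₀.2⟩
      exact absurd ((h.mono hsub).isBounded ordConnected_Iio hR
        fun _ hs => hρ ⟨hsub hs, Iio_subset_Iic_self hs⟩).bddBelow (not_bddBelow_Iio s₀)
    | top => exact absurd hs₀.1 not_top_lt
    | coe aR => exact ⟨aR, rfl⟩
  have has₀ : aR < s₀ := EReal.coe_lt_coe_iff.1 hs₀.1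
  have hsub : Ioo aR s₀ ⊆ (↑) ⁻¹' Ioo (aR : EReal) b := fun s hs =>
    ⟨EReal.coe_lt_coe_iff.2 hs.1, (EReal.coe_lt_coe_iff.2 hs.2).trans hs₀.2⟩
  have hρ' : MapsTo (‖x ·‖) (Ioo aR s₀) (Icc δ R) := fun s hs => hρ ⟨hsub hs, hs.2.le⟩
  obtain ⟨ℓ, hℓ⟩ := exists_tendsto_nhdsGT_of_mapsTo_Icc has₀
    (((h.mono hsub).strictMonoOn_or_strictAntiOn ordConnected_Ioo).imp
      StrictMonoOn.monotoneOn StrictAntiOn.antitoneOn) hρ'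
  obtain ⟨L, hL, hL₂⟩ :=
    (h.mono hsub).exists_tendsto ordConnected_Ioo hR hρ' (Ioo_mem_nhdsGT has₀) hℓ
  exact ⟨aR, rfl, L, hL.mono_left (nhdsWithin_mono _ fun s hs => EReal.coe_lt_coe_iff.1 hs.1), hL₂⟩

theorem exists_norm_eq (h : IsUnitTimelikeOn M ((↑) ⁻¹' Ioo a b) t t' x x') {s₀ r₀ : ℝ}
    (hs₀ : (s₀ : EReal) ∈ Ioo a b) (hr₀ : 0 < r₀) (hr₀' : r₀ < 2 * M)
    (hb : ∀ bR : ℝ, b = bR → ∀ L : ℝ × EuclideanSpace ℝ (Fin 3),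
      Tendsto (fun s => (t s, x s)) (𝓝[(↑) ⁻¹' Ioo a b] bR) (𝓝 L) → ‖L.2‖ ∉ Ioo 0 (2 * M))
    (ha : ∀ aR : ℝ, a = aR → ∀ L : ℝ × EuclideanSpace ℝ (Fin 3),
      Tendsto (fun s => (t s, x s)) (𝓝[(↑) ⁻¹' Ioo a b] aR) (𝓝 L) → ‖L.2‖ ∉ Ioo 0 (2 * M)) :
    ∃ s : ℝ, (s : EReal) ∈ Ioo a b ∧ ‖x s‖ = r₀ := by
  by_contra! hne
  have hI := EReal.ordConnected_preimage_coe_Ioo a b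
  have hR : ‖x s₀‖ ⊔ r₀ < 2 * M := sup_lt_iff.2 ⟨h.norm_lt s₀ hs₀, hr₀'⟩
  have hIcc : Icc (‖x s₀‖ ⊓ r₀) (‖x s₀‖ ⊔ r₀) ⊆ Ioo 0 (2 * M) :=
    Icc_subset_Ioo (lt_inf_iff.2 ⟨h.norm_pos s₀ hs₀, hr₀⟩) hR
  rcases mapsTo_inter_Ici_or_mapsTo_inter_Iic_uIcc
    ((h.strictMonoOn_or_strictAntiOn hI).imp StrictMonoOn.monotoneOn StrictAntiOn.antitoneOn)
    (hI.isPreconnected.forall_lt_or_forall_gt_of_forall_ne h.continuousOn_norm hne) hs₀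
    with hright | hleft
  · obtain ⟨bR, hbR, L, hL, hL₂⟩ := h.exists_tendsto_right hs₀ hR hright
    exact hb bR hbR L hL (hIcc hL₂)
  · obtain ⟨aR, haR, L, hL, hL₂⟩ := h.exists_tendsto_left hs₀ hR hleft
    exact ha aR haR L hL (hIcc hL₂)

end IsUnitTimelikeOn

theorem inextensible_timelike_meets_cauchy_surface_once_general (M : ℝ)
    (r₀ : ℝ) (hr₀ : 0 < r₀) (hr₀' : r₀ < 2 * M)
    (a b : EReal) (hab : a < b)
    (t t' : ℝ → ℝ) (x x' : ℝ → EuclideanSpace ℝ (Fin 3))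
    (ht : ∀ s : ℝ, a < (s : EReal) → (s : EReal) < b →
      HasDerivWithinAt t (t' s) {σ : ℝ | a < (σ : EReal) ∧ (σ : EReal) < b} s)
    (hx : ∀ s : ℝ, a < (s : EReal) → (s : EReal) < b →
      HasDerivWithinAt x (x' s) {σ : ℝ | a < (σ : EReal) ∧ (σ : EReal) < b} s)
    (hr : ∀ s : ℝ, a < (s : EReal) → (s : EReal) < b → 0 < ‖x s‖ ∧ ‖x s‖ < 2 * M)
    (hQ : ∀ s : ℝ, a < (s : EReal) → (s : EReal) < b → QM M (t' s) (x' s) (x s) = -1)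
    (hinext_b : ∀ bR : ℝ, b = (bR : EReal) →
      ¬ ∃ γ' : ℝ → ℝ × EuclideanSpace ℝ (Fin 3),
        ContinuousOn γ' (insert bR {σ : ℝ | a < (σ : EReal) ∧ (σ : EReal) < b}) ∧
        (∀ s : ℝ, a < (s : EReal) → (s : EReal) < b → γ' s = (t s, x s)) ∧
        0 < ‖(γ' bR).2‖ ∧ ‖(γ' bR).2‖ < 2 * M)
    (hinext_a : ∀ aR : ℝ, a = (aR : EReal) →
      ¬ ∃ γ' : ℝ → ℝ × EuclideanSpace ℝ (Fin 3),
        ContinuousOn γ' (insert aR {σ : ℝ | a < (σ : EReal) ∧ (σ : EReal) < b}) ∧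
        (∀ s : ℝ, a < (s : EReal) → (s : EReal) < b → γ' s = (t s, x s)) ∧
        0 < ‖(γ' aR).2‖ ∧ ‖(γ' aR).2‖ < 2 * M) :
    ∃! s : ℝ, (a < (s : EReal) ∧ (s : EReal) < b) ∧ ‖x s‖ = r₀ := by
  have hIo := EReal.isOpen_preimage_coe_Ioo a b
  have hγ : IsUnitTimelikeOn M ((↑) ⁻¹' Ioo a b) t t' x x' :=
    ⟨fun s hs => (ht s hs.1 hs.2).hasDerivAt (hIo.mem_nhds hs),
      fun s hs => (hx s hs.1 hs.2).hasDerivAt (hIo.mem_nhds hs),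
      fun s hs => (hr s hs.1 hs.2).1, fun s hs => (hr s hs.1 hs.2).2, fun s hs => hQ s hs.1 hs.2⟩
  obtain ⟨s₀, hs₀⟩ := EReal.exists_between_coe_real hab
  refine existsUnique_of_exists_of_unique ?_ fun s₁ s₂ ⟨hs₁, e₁⟩ ⟨hs₂, e₂⟩ =>
    (hγ.strictMonoOn_or_strictAntiOn (EReal.ordConnected_preimage_coe_Ioo a b)).elim
      StrictMonoOn.injOn StrictAntiOn.injOn hs₁ hs₂ (e₁.trans e₂.symm)
  refine hγ.exists_norm_eq hs₀ hr₀ hr₀' (fun bR hbR L hL hL₂ => hinext_b bR hbR ?_)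
    fun aR haR L hL hL₂ => hinext_a aR haR ?_
  · obtain ⟨γ', hc, heq, rfl⟩ :=
      hγ.continuousOn.exists_extension_of_tendsto (fun h => h.2.ne hbR.symm) hL
    exact ⟨γ', hc, fun s h₁ h₂ => heq ⟨h₁, h₂⟩, hL₂⟩
  · obtain ⟨γ', hc, heq, rfl⟩ :=
      hγ.continuousOn.exists_extension_of_tendsto (fun h => h.1.ne haR) hL
    exact ⟨γ', hc, fun s h₁ h₂ => heq ⟨h₁, h₂⟩, hL₂⟩

/-- Let `M > 0` and `r₀ ∈ (0, 2M)`. Let `−∞ ≤ a < b ≤ ∞` and let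
`γ = (t, x) : (a, b) → ℝ × ℝ³` be a C¹ curve with `0 < ‖x(s)‖ < 2M` and
`Q_M(t'(s), x'(s), x(s)) = −1` for every `s ∈ (a, b)`. Assume `γ` is inextensible at
both ends: for each finite endpoint of `(a, b)`, there is no continuous extension of
`γ` to the interval including that endpoint whose value there has spatial part of
norm strictly between `0` and `2M`. Then there exists exactly one `s ∈ (a, b)` with
`‖x(s)‖ = r₀`; i.e., every inextensible unit-speed timelike curve of the interior
Schwarzschild spacetime meets the hypersurface `S_{r₀}` exactly once
(`S_{r₀}` is a Cauchy surface for timelike curves). -/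
theorem inextensible_timelike_meets_cauchy_surface_once (M : ℝ) (hM : 0 < M)
    (r₀ : ℝ) (hr₀ : 0 < r₀) (hr₀' : r₀ < 2 * M)
    (a b : EReal) (hab : a < b)
    (t t' : ℝ → ℝ) (x x' : ℝ → EuclideanSpace ℝ (Fin 3))
    (ht : ∀ s : ℝ, a < (s : EReal) → (s : EReal) < b →
      HasDerivWithinAt t (t' s) {σ : ℝ | a < (σ : EReal) ∧ (σ : EReal) < b} s)
    (hx : ∀ s : ℝ, a < (s : EReal) → (s : EReal) < b →
      HasDerivWithinAt x (x' s) {σ : ℝ | a < (σ : EReal) ∧ (σ : EReal) < b} s)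
    (ht'c : ContinuousOn t' {σ : ℝ | a < (σ : EReal) ∧ (σ : EReal) < b})
    (hx'c : ContinuousOn x' {σ : ℝ | a < (σ : EReal) ∧ (σ : EReal) < b})
    (hr : ∀ s : ℝ, a < (s : EReal) → (s : EReal) < b → 0 < ‖x s‖ ∧ ‖x s‖ < 2 * M)
    (hQ : ∀ s : ℝ, a < (s : EReal) → (s : EReal) < b → QM M (t' s) (x' s) (x s) = -1)
    (hinext_b : ∀ bR : ℝ, b = (bR : EReal) →
      ¬ ∃ γ' : ℝ → ℝ × EuclideanSpace ℝ (Fin 3),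
        ContinuousOn γ' (insert bR {σ : ℝ | a < (σ : EReal) ∧ (σ : EReal) < b}) ∧
        (∀ s : ℝ, a < (s : EReal) → (s : EReal) < b → γ' s = (t s, x s)) ∧
        0 < ‖(γ' bR).2‖ ∧ ‖(γ' bR).2‖ < 2 * M)
    (hinext_a : ∀ aR : ℝ, a = (aR : EReal) →
      ¬ ∃ γ' : ℝ → ℝ × EuclideanSpace ℝ (Fin 3),
        ContinuousOn γ' (insert aR {σ : ℝ | a < (σ : EReal) ∧ (σ : EReal) < b}) ∧
        (∀ s : ℝ, a < (s : EReal) → (s : EReal) < b → γ' s = (t s, x s)) ∧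
        0 < ‖(γ' aR).2‖ ∧ ‖(γ' aR).2‖ < 2 * M) :
    ∃! s : ℝ, (a < (s : EReal) ∧ (s : EReal) < b) ∧ ‖x s‖ = r₀ :=
  inextensible_timelike_meets_cauchy_surface_once_general M r₀ hr₀ hr₀' a b hab t t' x x' ht hx hr
    hQ hinext_b hinext_a
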